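/- Let N ≥ 2 be an integer, let γ > 0, ρ > 0 be reals, and let δ be a real with 0 < δ < √2·N·√((N−1)/(3N+1)). For λ > 0 set d(λ) = √(γλ)·δ, R(λ) = ρ² + (8γN² − 4d(λ)ρ(3N+1))/(λ(N+1)²) − 4d(λ)²(3N+1)/(λ²(N−1)(N+1)²), and a(λ) = (d(λ)(6N+2) − λ(N+1)²(ρ − √(R(λ))))/(4N²). Then R(λ) > 0 for all sufficiently small λ > 0, and lim_{λ→0⁺} a(λ)/√(γλ) = D̄(N,δ)·(N+1)²/(2N²) + (3N+1)δ/(2N²). -/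

import Mathlib

open Filter

/-- `d(λ) = √(γλ)·δ`. -/
noncomputable def dCoef (γ δ lam : ℝ) : ℝ := Real.sqrt (γ * lam) * δ

/-- The discriminant `R(λ)` appearing in the explicit formula for `a(λ)`. -/
noncomputable def RCoef (N : ℕ) (γ ρ δ lam : ℝ) : ℝ :=
  ρ ^ 2 + (8 * γ * (N : ℝ) ^ 2 - 4 * dCoef γ δ lam * ρ * (3 * (N : ℝ) + 1))
      / (lam * ((N : ℝ) + 1) ^ 2)
    - 4 * (dCoef γ δ lam) ^ 2 * (3 * (N : ℝ) + 1)
      / (lam ^ 2 * ((N : ℝ) - 1) * ((N : ℝ) + 1) ^ 2)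

/-- The coefficient `a(λ)`. -/
noncomputable def aCoef (N : ℕ) (γ ρ δ lam : ℝ) : ℝ :=
  (dCoef γ δ lam * (6 * (N : ℝ) + 2)
      - lam * ((N : ℝ) + 1) ^ 2 * (ρ - Real.sqrt (RCoef N γ ρ δ lam)))
    / (4 * (N : ℝ) ^ 2)

/-- `D̄(N,y) = √((2N³ − 2N² − (3N+1)y²)/((N−1)(N+1)²))`. -/
noncomputable def Dbar (N : ℕ) (y : ℝ) : ℝ :=
  Real.sqrt ((2 * (N : ℝ) ^ 3 - 2 * (N : ℝ) ^ 2 - (3 * (N : ℝ) + 1) * y ^ 2)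
    / (((N : ℝ) - 1) * ((N : ℝ) + 1) ^ 2))

open Topology

/-! The identity `λ·R(λ) = ρ²λ + 4γ·D̄(N,δ)² − c·√(γλ)`, with `c` independent of `λ`, shows
that `λ·R(λ) → 4γ·D̄(N,δ)² > 0`, so `R(λ) > 0` for small `λ`. Dividing `a(λ)` by `√(γλ) = √γ·√λ` turns it into a continuous
expression in `√(λ·R(λ))` and `√λ`, whose limit is read off. -/

noncomputable def DbarRadicand (N : ℕ) (y : ℝ) : ℝ :=
  (2 * (N : ℝ) ^ 3 - 2 * (N : ℝ) ^ 2 - (3 * (N : ℝ) + 1) * y ^ 2)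
    / (((N : ℝ) - 1) * ((N : ℝ) + 1) ^ 2)

lemma Dbar_eq_sqrt_DbarRadicand (N : ℕ) (y : ℝ) : Dbar N y = √(DbarRadicand N y) := rfl

lemma DbarRadicand_pos {N : ℕ} (hN : 2 ≤ N) {y : ℝ} (hy0 : 0 ≤ y)
    (hy : y < √2 * N * √((N - 1) / (3 * N + 1))) : 0 < DbarRadicand N y := by
  have hn : (2 : ℝ) ≤ N := by exact_mod_cast hN
  have hnum : (3 * N + 1) * y ^ 2 < (2 * N ^ 3 - 2 * N ^ 2 : ℝ) :=
    calc (3 * N + 1) * y ^ 2 < (3 * N + 1) * (√2 * N * √((N - 1) / (3 * N + 1))) ^ 2 := by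
          gcongr
      _ = 2 * (N : ℝ) ^ 3 - 2 * N ^ 2 := by
          rw [mul_pow, mul_pow, Real.sq_sqrt zero_le_two,
            Real.sq_sqrt (div_nonneg (by linarith) (by linarith))]
          field_simp
  unfold DbarRadicand
  apply div_pos <;> nlinarith

lemma mul_RCoef {N : ℕ} (hN : N ≠ 1) {γ : ℝ} (hγ : 0 ≤ γ) (ρ δ : ℝ) {lam : ℝ} (hl : 0 < lam) :
    lam * RCoef N γ ρ δ lam = ρ ^ 2 * lam + 4 * γ * DbarRadicand N δ
      - 4 * δ * ρ * (3 * N + 1) / (N + 1) ^ 2 * √(γ * lam) := by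
  have hd : dCoef γ δ lam ^ 2 = γ * lam * δ ^ 2 := by
    rw [dCoef, mul_pow, Real.sq_sqrt (by positivity)]
  have h1 : (N : ℝ) - 1 ≠ 0 := sub_ne_zero.mpr (by exact_mod_cast hN)
  rw [RCoef, hd, DbarRadicand, dCoef]
  field_simp
  ring

lemma tendsto_mul_RCoef {N : ℕ} (hN : N ≠ 1) {γ : ℝ} (hγ : 0 ≤ γ) (ρ δ : ℝ) :
    Tendsto (fun lam => lam * RCoef N γ ρ δ lam) (𝓝[>] 0) (𝓝 (4 * γ * DbarRadicand N δ)) := by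
  have hlim : Tendsto (fun lam => ρ ^ 2 * lam + 4 * γ * DbarRadicand N δ
      - 4 * δ * ρ * (3 * N + 1) / (N + 1) ^ 2 * √(γ * lam)) (𝓝 0)
      (𝓝 (4 * γ * DbarRadicand N δ)) := by
    have hc : Continuous fun lam : ℝ => ρ ^ 2 * lam + 4 * γ * DbarRadicand N δ
        - 4 * δ * ρ * (3 * N + 1) / (N + 1) ^ 2 * √(γ * lam) := by fun_prop
    simpa using hc.tendsto 0
  refine (hlim.mono_left nhdsWithin_le_nhds).congr' ?_
  filter_upwards [self_mem_nhdsWithin] with lam hl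
  exact (mul_RCoef hN hγ ρ δ hl).symm

lemma aCoef_div_sqrt_eq {N : ℕ} (hN : N ≠ 0) {γ : ℝ} (hγ : 0 < γ) (ρ δ : ℝ) {lam : ℝ}
    (hl : 0 < lam) :
    aCoef N γ ρ δ lam / √(γ * lam) = (3 * N + 1) * δ / (2 * N ^ 2)
      + (N + 1) ^ 2 * (√(lam * RCoef N γ ρ δ lam) - ρ * √lam) / (4 * N ^ 2 * √γ) := by
  have hsl : 0 < √lam := Real.sqrt_pos.mpr hl
  have hsγ : 0 < √γ := Real.sqrt_pos.mpr hγ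
  have hlam : lam = √lam * √lam := (Real.mul_self_sqrt hl.le).symm
  rw [aCoef, dCoef, Real.sqrt_mul hγ.le, Real.sqrt_mul hl.le]
  nth_rewrite 2 [hlam]
  field_simp
  ring

theorem a_coef_asymptotics
    (N : ℕ) (hN : 2 ≤ N) (γ ρ : ℝ) (hγ : 0 < γ)
    (δ : ℝ) (hδ0 : 0 < δ)
    (hδ : δ < Real.sqrt 2 * (N : ℝ) * Real.sqrt (((N : ℝ) - 1) / (3 * (N : ℝ) + 1))) :
    (∀ᶠ lam in nhdsWithin (0 : ℝ) (Set.Ioi 0), 0 < RCoef N γ ρ δ lam) ∧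
    Tendsto (fun lam : ℝ => aCoef N γ ρ δ lam / Real.sqrt (γ * lam))
      (nhdsWithin (0 : ℝ) (Set.Ioi 0))
      (nhds (Dbar N δ * ((N : ℝ) + 1) ^ 2 / (2 * (N : ℝ) ^ 2)
        + (3 * (N : ℝ) + 1) * δ / (2 * (N : ℝ) ^ 2))) := by
  have hX := DbarRadicand_pos hN hδ0.le hδ
  have hR := tendsto_mul_RCoef (show N ≠ 1 by omega) hγ.le ρ δ
  constructor
  · filter_upwards [hR.eventually (eventually_gt_nhds (by positivity)), self_mem_nhdsWithin]
      with lam hpos hl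
    exact pos_of_mul_pos_right hpos (le_of_lt hl)
  have hsqrt : Tendsto (fun lam : ℝ => √lam) (𝓝[>] 0) (𝓝 0) := by
    simpa using (Real.continuous_sqrt.tendsto 0).mono_left nhdsWithin_le_nhds
  have hlim := tendsto_const_nhds (x := (3 * (N : ℝ) + 1) * δ / (2 * N ^ 2)) |>.add
    (((hR.sqrt.sub (hsqrt.const_mul ρ)).const_mul (((N : ℝ) + 1) ^ 2)).div_const (4 * N ^ 2 * √γ))
  have hval : √(4 * γ * DbarRadicand N δ) = 2 * √γ * Dbar N δ := by
    rw [Dbar_eq_sqrt_DbarRadicand, Real.sqrt_mul (by positivity), Real.sqrt_mul (by norm_num),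
      show (4 : ℝ) = 2 ^ 2 by norm_num, Real.sqrt_sq zero_le_two]
  have hN0 : (N : ℝ) ≠ 0 := by positivity
  have hsγ : √γ ≠ 0 := (Real.sqrt_pos.mpr hγ).ne'
  rw [hval, mul_zero, sub_zero] at hlim
  convert hlim.congr' ?_ using 2
  · field_simp
    ring
  · filter_upwards [self_mem_nhdsWithin] with lam hl
    exact (aCoef_div_sqrt_eq (by omega) hγ ρ δ hl).symm
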